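/- arXiv:1203.3438 — 4 statements merged into one kernel-verified Lean document; each statement's English description precedes it below -/
import Mathlib

section
/- Let a, b, c be positive reals satisfying the strict triangle inequalities a < b + c, b < c + a, c < a + b, and let s = (a+b+c)/2. Define t_A = s − a, t_B = s − b, t_C = s − c and r = sqrt(t_A·t_B·t_C / s). Then the argument of the complex number (r + i·t_A)(r + i·t_B)(r + i·t_C) equals π. -/
open Complex Real

theorem stmt_1 (a b c : ℝ) (ha : 0 < a) (hb : 0 < b) (hc : 0 < c)
    (hab : a < b + c) (hbc : b < c + a) (hca : c < a + b) :
    let s := (a + b + c) / 2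
    let tA := s - a
    let tB := s - b
    let tC := s - c
    let r := Real.sqrt (tA * tB * tC / s)
    (((r : ℂ) + tA * I) * ((r : ℂ) + tB * I) * ((r : ℂ) + tC * I)).arg = π := by
  intro s tA tB tC r
  have hs : 0 < s := by simp only [s]; linarith
  have htA : 0 < tA := by simp only [tA, s]; linarith
  have htB : 0 < tB := by simp only [tB, s]; linarith
  have htC : 0 < tC := by simp only [tC, s]; linarith
  have hr : 0 < r := Real.sqrt_pos.mpr (by positivity)
  have hr2 : r ^ 2 = tA * tB * tC / s := Real.sq_sqrt (by positivity)
  have hsum : tA + tB + tC = s := by simp only [tA, tB, tC, s]; ring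
  have him : r ^ 2 * (tA + tB + tC) = tA * tB * tC := by
    rw [hr2, hsum]; field_simp
  have himC : (r : ℂ) ^ 2 * ((tA : ℂ) + tB + tC) = (tA : ℂ) * tB * tC := by
    exact_mod_cast him
  have hprod : (((r : ℂ) + tA * I) * ((r : ℂ) + tB * I) * ((r : ℂ) + tC * I))
      = ((r * (r ^ 2 - (tA * tB + tB * tC + tC * tA)) : ℝ) : ℂ) := by
    apply Complex.ext
    · simp only [Complex.add_re, Complex.add_im, Complex.mul_re, Complex.mul_im,
        Complex.ofReal_re, Complex.ofReal_im, Complex.I_re, Complex.I_im]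
      ring
    · simp only [Complex.add_re, Complex.add_im, Complex.mul_re, Complex.mul_im,
        Complex.ofReal_re, Complex.ofReal_im, Complex.I_re, Complex.I_im]
      linear_combination him
  rw [hprod]
  apply Complex.arg_ofReal_of_neg
  have hlt : r ^ 2 < tA * tB + tB * tC + tC * tA := by
    rw [hr2, div_lt_iff₀ hs]
    nlinarith [mul_pos (mul_pos htA htB) (show (0:ℝ) < s - tC by simp only [tC]; linarith),
      mul_pos (mul_pos htB htC) hs, mul_pos (mul_pos htC htA) hs]
  nlinarith
end

section
/- Let n be odd and a_1,…,a_n positive reals. There exist positive reals t_1,…,t_n with a_j = t_j + t_{j+1} for all j (indices mod n) if and only if for every cyclic rotation, the alternating sum a_j − a_{j+1} + a_{j+2} − ⋯ + a_{j−1} is positive. -/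
/-!
If `a j = t j + t (j + 1)`, the alternating sum of `a` starting at `j` telescopes to `2 t j`,
because `n` is odd and so the last term `t (j + n) = t j` enters with sign `+`. Thus `t` is
forced to be half the alternating sums of `a`, and it solves the system whenever these are positive.
-/

open Finset

variable {R : Type*} [CommRing R] {n : ℕ}

def cyclicAltSum (f : Fin n → R) (j : Fin n) : R :=
  ∑ i : Fin n, (-1) ^ (i : ℕ) * f (j + i)

theorem cyclicAltSum_add (f g : Fin n → R) (j : Fin n) :
    cyclicAltSum (f + g) j = cyclicAltSum f j + cyclicAltSum g j := by
  simp only [cyclicAltSum, Pi.add_apply, mul_add, sum_add_distrib]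

theorem cyclicAltSum_comp_add_one [NeZero n] (f : Fin n → R) (j : Fin n) :
    cyclicAltSum (fun k => f (k + 1)) j = cyclicAltSum f (j + 1) := by
  simp only [cyclicAltSum, add_right_comm]

theorem cyclicAltSum_add_cyclicAltSum_add_one [NeZero n] (hn : Odd n) (f : Fin n → R)
    (j : Fin n) : cyclicAltSum f j + cyclicAltSum f (j + 1) = 2 * f j := by
  obtain ⟨m, rfl⟩ : ∃ m, n = m + 1 := Nat.exists_eq_add_one.mpr (NeZero.pos n)
  have hm : Even m := by simpa [Nat.odd_add_one] using hn
  have hlast : j + 1 + Fin.last m = j := by rw [add_assoc, add_comm 1, Fin.last_add_one, add_zero]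
  have hshift (i : Fin m) : (-1) ^ (i.succ : ℕ) * f (j + i.succ) =
      -((-1) ^ (i.castSucc : ℕ) * f (j + 1 + i.castSucc)) := by
    rw [Fin.val_succ, Fin.val_castSucc, pow_succ, ← Fin.coeSucc_eq_succ, add_right_comm, add_assoc]
    ring
  rw [cyclicAltSum, cyclicAltSum, Fin.sum_univ_succ, Fin.sum_univ_castSucc, sum_congr rfl
    fun i _ => hshift i, sum_neg_distrib, hlast, Fin.val_last, hm.neg_one_pow]
  simp only [Fin.val_zero, pow_zero, add_zero, one_mul]
  ring

theorem stmt_4_general (n : ℕ) [NeZero n] (hn : Odd n) (a : Fin n → ℝ) :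
    (∃ t : Fin n → ℝ, (∀ j, 0 < t j) ∧ ∀ j : Fin n, a j = t j + t (j + 1)) ↔
      ∀ j : Fin n, 0 < ∑ i : Fin n, (-1 : ℝ) ^ (i : ℕ) * a (j + i) := by
  change _ ↔ ∀ j, 0 < cyclicAltSum a j
  constructor
  · rintro ⟨t, ht, hat⟩ j
    have ha : a = t + fun k => t (k + 1) := funext hat
    rw [ha, cyclicAltSum_add, cyclicAltSum_comp_add_one,
      cyclicAltSum_add_cyclicAltSum_add_one hn]
    linarith [ht j]
  · intro hpos
    refine ⟨fun j => cyclicAltSum a j / 2, fun j => half_pos (hpos j), fun j => ?_⟩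
    linarith [cyclicAltSum_add_cyclicAltSum_add_one hn a j]

theorem stmt_4 (n : ℕ) [NeZero n] (hn : Odd n) (a : Fin n → ℝ) (ha : ∀ j, 0 < a j) :
    (∃ t : Fin n → ℝ, (∀ j, 0 < t j) ∧ ∀ j : Fin n, a j = t j + t (j + 1)) ↔
      ∀ j : Fin n, 0 < ∑ i : Fin n, (-1 : ℝ) ^ (i : ℕ) * a (j + i) :=
  stmt_4_general n hn a
end

section
/- Let n be even and a_1,…,a_n reals with a_1 − a_2 + a_3 − ⋯ − a_n = 0. Then there exist positive t_1,…,t_n with a_j = t_j + t_{j+1} (indices mod n) if and only if min over odd k ≤ n−1 of (a_1 − a_2 + ⋯ + a_k) > max over even k ≤ n−2 of (a_1 − a_2 + ⋯ + a_k, including the empty sum 0). -/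
/-!
Lifting indices to `ℕ`, the recursion `a k = t k + t (k + 1)` forces
`S k = t 0 - (-1) ^ k * t k` for the alternating partial sums `S`, so a solution is
determined by `c = t 0` through `t k = (-1) ^ k * (c - S k)`. Conversely this formula
always solves the recursion along `ℕ`, and it is `n`-periodic (hence a cyclic solution)
because `n` is even and `S n = 0`. Its positivity says exactly that `c` lies strictly
above the even partial sums and below the odd ones, and such a `c` exists iff every even
partial sum is below every odd one.
-/

open Finset Function

section AltSum

variable {R : Type*} [CommRing R]

def altSum (a : ℕ → R) (k : ℕ) : R :=
  ∑ i ∈ range k, (-1) ^ i * a i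

theorem altSum_zero (a : ℕ → R) : altSum a 0 = 0 := sum_range_zero _

theorem altSum_succ (a : ℕ → R) (k : ℕ) : altSum a (k + 1) = altSum a k + (-1) ^ k * a k :=
  sum_range_succ _ k

theorem altSum_add (a : ℕ → R) (m k : ℕ) :
    altSum a (m + k) = altSum a m + (-1) ^ m * altSum (fun i => a (m + i)) k := by
  simp only [altSum, sum_range_add, mul_sum, pow_add, mul_assoc]

theorem altSum_periodic {a : ℕ → R} {n : ℕ} (ha : Periodic a n) (hn : Even n)
    (hsum : altSum a n = 0) : Periodic (altSum a) n := by
  intro k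
  have hshift : (fun i => a (n + i)) = a := funext fun i => by rw [add_comm]; exact ha i
  rw [add_comm, altSum_add, hsum, hshift, hn.neg_one_pow, zero_add, one_mul]

theorem altSum_eq_of_forall_eq_add {a t : ℕ → R} (h : ∀ k, a k = t k + t (k + 1)) (k : ℕ) :
    altSum a k = t 0 - (-1) ^ k * t k := by
  induction k with
  | zero => simp [altSum_zero]
  | succ k ih => rw [altSum_succ, ih, h k]; ring

/-- The unique solution of `a k = t k + t (k + 1)` with `t 0 = c`. -/
def altSolution (a : ℕ → R) (c : R) (k : ℕ) : R :=
  (-1) ^ k * (c - altSum a k)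

theorem altSolution_add_altSolution_succ (a : ℕ → R) (c : R) (k : ℕ) :
    altSolution a c k + altSolution a c (k + 1) = a k := by
  simp only [altSolution, altSum_succ, pow_succ]
  linear_combination a k * (Even.neg_one_pow ⟨k, rfl⟩ : (-1 : R) ^ (k + k) = 1)

theorem altSolution_periodic {a : ℕ → R} {n : ℕ} (ha : Periodic a n) (hn : Even n)
    (hsum : altSum a n = 0) (c : R) : Periodic (altSolution a c) n := by
  intro k
  simp only [altSolution, altSum_periodic ha hn hsum k, pow_add, hn.neg_one_pow, mul_one]

end AltSum

section Cyclic

variable {n : ℕ} [NeZero n]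

theorem Fin.ofNat_add_self (k : ℕ) : Fin.ofNat n (k + n) = Fin.ofNat n k := by
  ext; simp only [Fin.val_ofNat, Nat.add_mod_right]

theorem Fin.ofNat_succ (k : ℕ) : Fin.ofNat n (k + 1) = Fin.ofNat n k + 1 := by
  ext; rw [Fin.val_ofNat, Fin.val_add, Fin.val_ofNat, Fin.val_one', Nat.add_mod]

theorem Function.Periodic.map_val_ofNat {α : Type*} {T : ℕ → α} (hT : Periodic T n)
    (k : ℕ) : T (Fin.ofNat n k) = T k := by
  rw [Fin.val_ofNat, hT.map_mod_nat]

variable {R : Type*} [CommRing R] [LinearOrder R] [IsStrictOrderedRing R] (a : Fin n → R)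

theorem altSum_bounds_of_eq_add {t : Fin n → R} (ht : ∀ j, 0 < t j)
    (h : ∀ j, a j = t j + t (j + 1)) :
    (∀ l, Even l → altSum (fun i => a (Fin.ofNat n i)) l < t 0) ∧
      ∀ k, Odd k → t 0 < altSum (fun i => a (Fin.ofNat n i)) k := by
  have hS := altSum_eq_of_forall_eq_add (a := fun k => a (Fin.ofNat n k))
    (t := fun k => t (Fin.ofNat n k)) fun k => by rw [h, Fin.ofNat_succ]
  refine ⟨fun l hl => ?_, fun k hk => ?_⟩
  · rw [hS, hl.neg_one_pow, Fin.ofNat_zero, one_mul, sub_lt_self_iff]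
    exact ht _
  · rw [hS, hk.neg_one_pow, Fin.ofNat_zero, neg_one_mul, sub_neg_eq_add, lt_add_iff_pos_right]
    exact ht _

theorem exists_pos_eq_add_of_altSum_bounds (hn : Even n)
    (hsum : altSum (fun i => a (Fin.ofNat n i)) n = 0) {c : R}
    (hE : ∀ l < n, Even l → altSum (fun i => a (Fin.ofNat n i)) l < c)
    (hO : ∀ k < n, Odd k → c < altSum (fun i => a (Fin.ofNat n i)) k) :
    ∃ t : Fin n → R, (∀ j, 0 < t j) ∧ ∀ j, a j = t j + t (j + 1) := by
  set a' : ℕ → R := fun i => a (Fin.ofNat n i)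
  set T := altSolution a' c
  have hT : Periodic T n :=
    altSolution_periodic (fun k => congrArg a (Fin.ofNat_add_self k)) hn hsum c
  refine ⟨fun j => T j, fun j => ?_, fun j => ?_⟩
  · rcases Nat.even_or_odd j with hj | hj
    · simpa only [T, altSolution, hj.neg_one_pow, one_mul, sub_pos] using hE j j.isLt hj
    · simpa only [T, altSolution, hj.neg_one_pow, neg_one_mul, neg_pos, sub_neg]
        using hO j j.isLt hj
  · calc a j = a' j := by simp only [a', Fin.ofNat_val_eq_self]
      _ = T j + T (j + 1 : ℕ) := (altSolution_add_altSolution_succ a' c j).symm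
      _ = T j + T (Fin.ofNat n (j + 1 : ℕ)) := by rw [hT.map_val_ofNat]
      _ = T j + T (j + 1 : Fin n) := by rw [Fin.ofNat_succ, Fin.ofNat_val_eq_self]

end Cyclic

theorem stmt_6 (n : ℕ) [NeZero n] (hn : Even n) (a : Fin n → ℝ)
    (h0 : ∑ i : Fin n, (-1 : ℝ) ^ (i : ℕ) * a i = 0) :
    (∃ t : Fin n → ℝ, (∀ j, 0 < t j) ∧ ∀ j : Fin n, a j = t j + t (j + 1)) ↔
      ∀ k l : ℕ, k ≤ n - 1 → Odd k → l ≤ n - 2 → Even l →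
        (∑ i ∈ Finset.range l, (-1 : ℝ) ^ i * a (Fin.ofNat n i)) <
          ∑ i ∈ Finset.range k, (-1 : ℝ) ^ i * a (Fin.ofNat n i) := by
  set S := altSum (fun i => a (Fin.ofNat n i))
  constructor
  · rintro ⟨t, ht, h⟩ k l - hk - hl
    obtain ⟨hE, hO⟩ := altSum_bounds_of_eq_add a ht h
    exact (hE l hl).trans (hO k hk)
  · intro h
    have hsum : S n = 0 := by
      change ∑ i ∈ range n, _ = 0
      rw [← h0, ← Fin.sum_univ_eq_sum_range]
      simp only [Fin.ofNat_val_eq_self]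
    obtain ⟨c, hE, hO⟩ := Finset.exists_between' (((range n).filter Even).image S)
      (((range n).filter Odd).image S) <| by
        simp only [forall_mem_image, mem_filter, mem_range]
        rintro l ⟨hl, he⟩ k ⟨hk, ho⟩
        have hl2 : l ≤ n - 2 := by obtain ⟨r, rfl⟩ := he; obtain ⟨s, rfl⟩ := hn; omega
        exact h k l (by omega) ho hl2 he
    simp only [forall_mem_image, mem_filter, mem_range] at hE hO
    exact exists_pos_eq_add_of_altSum_bounds a hn hsum (fun l hl he => hE ⟨hl, he⟩)
      fun k hk ho => hO ⟨hk, ho⟩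
end

section
/- Let t_1,…,t_n be positive reals with n ≥ 3, and let k = ⌊(n−1)/2⌋. Then there exist exactly k distinct positive reals r_1 > r_2 > ⋯ > r_k such that Σ_{j=1}^n arctan(t_j/r_m) = mπ for m = 1,…,k. -/
open Real Filter Set Topology

theorem stmt_13 (n : ℕ) (hn : 3 ≤ n) (t : Fin n → ℝ) (ht : ∀ j, 0 < t j)
    (k : ℕ) (hk : k = (n - 1) / 2) :
    ∃ R : Fin k → ℝ, StrictAnti R ∧ (∀ m, 0 < R m) ∧
      (∀ m : Fin k, ∑ j : Fin n, Real.arctan (t j / R m) = ((m : ℕ) + 1) * π) ∧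
      (∀ r : ℝ, 0 < r → ∀ m : Fin k,
        (∑ j : Fin n, Real.arctan (t j / r)) = ((m : ℕ) + 1) * π → r = R m) := by
  set f : ℝ → ℝ := fun r => ∑ j : Fin n, Real.arctan (t j / r) with hf
  have hne : (Finset.univ : Finset (Fin n)).Nonempty := ⟨⟨0, by omega⟩, Finset.mem_univ _⟩
  have hanti : StrictAntiOn f (Set.Ioi 0) := by
    intro a ha b hb hab
    refine Finset.sum_lt_sum_of_nonempty hne fun j _ => ?_
    exact Real.arctan_strictMono (div_lt_div_of_pos_left (ht j) ha hab)
  have hcont : ContinuousOn f (Set.Ioi 0) := by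
    refine continuousOn_finset_sum _ fun j _ => ?_
    exact Real.continuous_arctan.comp_continuousOn
      (continuousOn_const.div continuousOn_id fun x hx => ne_of_gt hx)
  have hlim_top : Tendsto f atTop (𝓝 0) := by
    have : Tendsto f atTop (𝓝 (∑ j : Fin n, Real.arctan 0)) := by
      refine tendsto_finset_sum _ fun j _ => ?_
      exact (Real.continuous_arctan.tendsto 0).comp (tendsto_const_nhds.div_atTop tendsto_id)
    simpa using this
  have hlim_zero : Tendsto f (𝓝[>] 0) (𝓝 ((n : ℝ) * (π / 2))) := by
    have : Tendsto f (𝓝[>] 0) (𝓝 (∑ _j : Fin n, π / 2)) := by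
      refine tendsto_finset_sum _ fun j _ => ?_
      have h1 : Tendsto (fun r : ℝ => t j / r) (𝓝[>] 0) atTop := by
        simpa [div_eq_mul_inv] using tendsto_inv_nhdsGT_zero.const_mul_atTop (ht j)
      exact (Real.tendsto_arctan_atTop.mono_right nhdsWithin_le_nhds).comp h1
    simpa [Finset.sum_const, Finset.card_univ] using this
  have hπ : 0 < π := Real.pi_pos
  have hex : ∀ m : Fin k, ∃ r, r ∈ Set.Ioi (0:ℝ) ∧ f r = ((m : ℕ) + 1) * π := by
    intro m
    set c : ℝ := ((m : ℕ) + 1) * π with hc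
    have hcn : c < (n : ℝ) * (π / 2) := by
      have h2 : 2 * ((m : ℕ) + 1) < n := by
        have := m.2; omega
      have : ((2 * ((m : ℕ) + 1) : ℕ) : ℝ) < (n : ℝ) := by exact_mod_cast h2
      calc c = ((2 * ((m : ℕ) + 1) : ℕ) : ℝ) * (π / 2) := by push_cast; ring
        _ < (n : ℝ) * (π / 2) := by
          exact mul_lt_mul_of_pos_right this (by linarith)
    have hc0 : 0 < c := by positivity
    have hA : ∀ᶠ r in 𝓝[>] (0:ℝ), c < f r ∧ 0 < r :=
      (hlim_zero.eventually (eventually_gt_nhds hcn)).and self_mem_nhdsWithin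
    obtain ⟨a, hac, ha0⟩ := hA.exists
    have hB : ∀ᶠ r in atTop, f r < c ∧ a < r :=
      (hlim_top.eventually (eventually_lt_nhds hc0)).and (eventually_gt_atTop a)
    obtain ⟨b, hbc, hab⟩ := hB.exists
    have hsub : Set.Icc a b ⊆ Set.Ioi 0 := fun x hx => lt_of_lt_of_le ha0 hx.1
    have := intermediate_value_Icc' (le_of_lt hab) (hcont.mono hsub)
    obtain ⟨r, hr, hrc⟩ := this ⟨le_of_lt hbc, le_of_lt hac⟩
    exact ⟨r, hsub hr, hrc⟩
  refine ⟨fun m => (hex m).choose, ?_, fun m => (hex m).choose_spec.1, ?_, ?_⟩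
  · intro m1 m2 hlt
    have h1 := (hex m1).choose_spec
    have h2 := (hex m2).choose_spec
    have hfv : f (hex m1).choose < f (hex m2).choose := by
      rw [h1.2, h2.2]
      have : ((m1 : ℕ) : ℝ) < ((m2 : ℕ) : ℝ) := by exact_mod_cast hlt
      nlinarith
    rcases lt_trichotomy (hex m2).choose (hex m1).choose with h | h | h
    · exact h
    · rw [h] at hfv; exact absurd hfv (lt_irrefl _)
    · exact absurd (hanti h1.1 h2.1 h) (not_lt.mpr (le_of_lt hfv))
  · exact fun m => (hex m).choose_spec.2
  · intro r hr m hrm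
    have h := (hex m).choose_spec
    exact hanti.injOn hr h.1 (hrm.trans h.2.symm)
end
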